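/- Let k be a perfect field of characteristic p and A a k-algebra. Then the perfect closure A^pf is isomorphic, as a k-algebra, to the colimit colim_{n ≥ 0} A^(p^{-n}) of the Frobenius twists, where the transition map A^(p^{-n-1}) → A^(p^{-n}) is given on generators by a ⊗ c ↦ a^p ⊗ c. -/

import Mathlib

/-!
Because `F_k` is an automorphism, `F_k^n` identifies `(k, F_k^{-n})` with `k` as `k`-algebras,
so `A^(p^{-n}) ≅ A` as rings via `a ⊗ c ↦ c^{p^n} • a`. Under these identifications the
transition maps become the Frobenius `φ_A`, and the colimit of `A →φ A →φ ⋯` in rings is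
`A^pf`, the `n`-th copy of `A` mapping by `a ↦ [(n, a)] = φ^{-n}(a)`. These maps are
`k`-linear because the structure map of the `n`-th copy is `c ↦ c^{p^n}` and
`φ^{-n}(c^{p^n}) = c`.
-/

open scoped TensorProduct

universe u v

variable (k : Type u) [Field k] (p : ℕ) [Fact p.Prime] [CharP k p] [PerfectRing k p]

/-- `F_k^m` for `m : ℤ`: integer powers of the Frobenius automorphism of the perfect
field `k`, as a ring homomorphism. -/
noncomputable def frobPow (m : ℤ) : k →+* k :=
  (((frobeniusEquiv k p : RingAut k) ^ m : RingAut k) : k ≃+* k).toRingHom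

/-- `(k, F_k^n)`: the field `k` regarded as a `k`-algebra via `F_k^n` (`n : ℤ`). -/
def FrobBase (_p : ℕ) (_n : ℤ) : Type u := k

instance (n : ℤ) : CommRing (FrobBase k p n) := inferInstanceAs (CommRing k)

noncomputable instance (n : ℤ) : Algebra k (FrobBase k p n) := (frobPow k p n).toAlgebra

/-- The Frobenius twist `A^(p^n) = A ⊗_k (k, F_k^n)` of a `k`-algebra `A`. -/
def Twist (A : Type v) [CommRing A] [Algebra k A] (n : ℤ) : Type (max v u) :=
  A ⊗[k] FrobBase k p n

noncomputable instance (A : Type v) [CommRing A] [Algebra k A] (n : ℤ) : CommRing (Twist k p A n) :=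
  inferInstanceAs (CommRing (A ⊗[k] FrobBase k p n))

/-- The identity of `k`, viewed as a ring homomorphism `k →+* (k, F_k^n)`. -/
def toFrobBase (n : ℤ) : k →+* FrobBase k p n := RingHom.id k

/-- The `k`-algebra structure on the twist `A^(p^n)` acting through the *right* tensor
factor by plain multiplication: `c • (a ⊗ d) = a ⊗ (c * d)`. -/
noncomputable instance (A : Type v) [CommRing A] [Algebra k A] (n : ℤ) :
    Algebra k (Twist k p A n) :=
  ((Algebra.TensorProduct.includeRight.toRingHom :
      FrobBase k p n →+* A ⊗[k] FrobBase k p n).comp (toFrobBase k p n)).toAlgebra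

/-- The pure tensor `a ⊗ c` as an element of the twist `A^(p^n)`. -/
noncomputable def twistMk (A : Type v) [CommRing A] [Algebra k A] (n : ℤ) (a : A) (c : k) :
    Twist k p A n :=
  a ⊗ₜ[k] (show FrobBase k p n from c)

/-- The `k`-algebra structure on the perfect closure `A^pf` of a `k`-algebra `A`, via
`k → A → A^pf`. -/
noncomputable instance perfectClosureBaseAlgebra
    (A : Type v) [CommRing A] [Algebra k A] [CharP A p] :
    Algebra k (PerfectClosure A p) :=
  ((PerfectClosure.of A p).comp (algebraMap k A)).toAlgebra

theorem apply_add_pow_pow_of_apply_succ_pow {M N : Type*} [Monoid M] {q : ℕ}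
    (τ : ℕ → M → N) (hτ : ∀ n x, τ (n + 1) (x ^ q) = τ n x) (m n : ℕ) (x : M) :
    τ (m + n) (x ^ q ^ m) = τ n x := by
  induction m with
  | zero => rw [zero_add, pow_zero, pow_one]
  | succ m ih => rw [pow_succ, pow_mul, add_right_comm, hτ, ih]

namespace PerfectClosure

variable (K : Type*) [CommRing K] [CharP K p]

noncomputable def mkRingHom (n : ℕ) : K →+* PerfectClosure K p :=
  ((frobeniusEquiv (PerfectClosure K p) p).symm.toRingHom ^ n).comp (of K p)

theorem mkRingHom_apply (n : ℕ) (x : K) : mkRingHom p K n x = mk K p (n, x) := by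
  apply (injective_frobenius (PerfectClosure K p) p).iterate n
  rw [iterate_frobenius_mk, mkRingHom, RingHom.comp_apply, RingHom.coe_pow]
  exact Function.LeftInverse.iterate (frobenius_apply_frobeniusEquiv_symm _ p) n _

theorem mkRingHom_zero : mkRingHom p K 0 = of K p := by
  rw [mkRingHom, pow_zero, RingHom.one_def, RingHom.id_comp]

theorem mkRingHom_succ_pow (n : ℕ) (x : K) :
    mkRingHom p K (n + 1) (x ^ p) = mkRingHom p K n x := by
  rw [mkRingHom_apply, mkRingHom_apply, mk_succ_pow]

theorem mkRingHom_pow_pow (n : ℕ) (x : K) : mkRingHom p K n (x ^ p ^ n) = of K p x :=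
  apply_add_pow_pow_of_apply_succ_pow (fun n => mkRingHom p K n) (mkRingHom_succ_pow p K) n 0 x

variable {K} {S : Type*} [CommRing S]

noncomputable def liftCompatible (τ : ℕ → K →+* S)
    (hτ : ∀ n x, τ (n + 1) (x ^ p) = τ n x) : PerfectClosure K p →+* S where
  toFun x := liftOn x (fun y => τ y.1 y.2) fun _ _ ⟨n, x⟩ => (hτ n x).symm
  map_one' := (τ 0).map_one
  map_zero' := (τ 0).map_zero
  map_mul' := by
    rintro ⟨m, x⟩ ⟨n, y⟩
    have hτ' := apply_add_pow_pow_of_apply_succ_pow (fun n => τ n) hτ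
    simp only [quot_mk_eq_mk, mk_mul_mk, liftOn_mk, map_mul, iterate_frobenius]
    rw [add_comm m n, hτ', add_comm n m, hτ']
  map_add' := by
    rintro ⟨m, x⟩ ⟨n, y⟩
    have hτ' := apply_add_pow_pow_of_apply_succ_pow (fun n => τ n) hτ
    simp only [quot_mk_eq_mk, mk_add_mk, liftOn_mk, map_add, iterate_frobenius]
    rw [add_comm m n, hτ', add_comm n m, hτ']

theorem liftCompatible_mkRingHom (τ : ℕ → K →+* S)
    (hτ : ∀ n x, τ (n + 1) (x ^ p) = τ n x) (n : ℕ) (x : K) :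
    liftCompatible p τ hτ (mkRingHom p K n x) = τ n x := by
  rw [mkRingHom_apply]
  rfl

theorem eq_liftCompatible (τ : ℕ → K →+* S) (hτ : ∀ n x, τ (n + 1) (x ^ p) = τ n x)
    (f : PerfectClosure K p →+* S) (hf : ∀ n x, f (mkRingHom p K n x) = τ n x) :
    f = liftCompatible p τ hτ := by
  ext y
  induction y using induction_on with
  | _ y => rw [← mkRingHom_apply, hf, liftCompatible_mkRingHom]

end PerfectClosure

theorem frobPow_natCast (n : ℕ) (c : k) : frobPow k p n c = c ^ p ^ n := by
  rw [frobPow, RingEquiv.toRingHom_eq_coe, RingEquiv.coe_toRingHom, zpow_natCast,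
    RingAut.coe_pow, coe_frobeniusEquiv, iterate_frobenius]

noncomputable def frobBaseEquiv (m : ℤ) : FrobBase k p m ≃ₐ[k] k :=
  AlgEquiv.ofRingEquiv (f := ((frobeniusEquiv k p : RingAut k) ^ (-m) : RingAut k)) fun c => by
    change ((frobeniusEquiv k p : RingAut k) ^ (-m)) (((frobeniusEquiv k p : RingAut k) ^ m) c) = c
    rw [← RingAut.mul_apply, ← zpow_add, neg_add_cancel, zpow_zero, RingAut.one_apply]

section Twist

variable (A : Type*) [CommRing A] [Algebra k A]

noncomputable def twistEquiv (m : ℤ) : Twist k p A m ≃+* A :=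
  ((Algebra.TensorProduct.congr AlgEquiv.refl (frobBaseEquiv k p m)).trans
    (Algebra.TensorProduct.rid k k A)).toRingEquiv

theorem twistEquiv_twistMk (m : ℤ) (a : A) (c : k) :
    twistEquiv k p A m (twistMk k p A m a c) = frobPow k p (-m) c • a :=
  rfl

theorem twistEquiv_symm_apply (m : ℤ) (a : A) :
    (twistEquiv k p A m).symm a = twistMk k p A m a 1 := by
  rw [RingEquiv.symm_apply_eq, twistEquiv_twistMk, map_one, one_smul]

theorem twistEquiv_neg_twistMk (n : ℕ) (a : A) (c : k) :
    twistEquiv k p A (-n) (twistMk k p A (-n) a c) = c ^ p ^ n • a := by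
  rw [twistEquiv_twistMk, neg_neg, frobPow_natCast]

theorem twistEquiv_neg_algebraMap (n : ℕ) (c : k) :
    twistEquiv k p A (-n) (algebraMap k (Twist k p A (-n)) c) = algebraMap k A (c ^ p ^ n) := by
  rw [Algebra.algebraMap_eq_smul_one (A := A)]
  exact twistEquiv_neg_twistMk k p A n 1 c

variable {S : Type*} [CommRing S] [Algebra k S]
  (σ : ∀ n : ℕ, Twist k p A (-(n : ℤ)) →ₐ[k] S)

noncomputable def untwistCocone (n : ℕ) : A →+* S :=
  (σ n : Twist k p A (-(n : ℤ)) →+* S).comp (twistEquiv k p A _).symm.toRingHom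

theorem untwistCocone_apply (n : ℕ) (a : A) :
    untwistCocone k p A σ n a = σ n ((twistEquiv k p A _).symm a) :=
  rfl

variable [CharP A p]

noncomputable def twistTransition (n : ℕ) :
    Twist k p A (-(n : ℤ)) →ₐ[k] Twist k p A (-((n + 1 : ℕ) : ℤ)) where
  toRingHom := (twistEquiv k p A _).symm.toRingHom.comp
    ((frobenius A p).comp (twistEquiv k p A _).toRingHom)
  commutes' c := by
    change (twistEquiv k p A _).symm (twistEquiv k p A _ (algebraMap k _ c) ^ p) = _
    rw [twistEquiv_neg_algebraMap, ← map_pow, ← pow_mul, ← pow_succ, RingEquiv.symm_apply_eq,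
      twistEquiv_neg_algebraMap]

theorem twistTransition_apply (n : ℕ) (x : Twist k p A (-(n : ℤ))) :
    twistTransition k p A n x = (twistEquiv k p A _).symm (twistEquiv k p A _ x ^ p) :=
  rfl

theorem twistTransition_twistMk (n : ℕ) (a : A) (c : k) :
    twistTransition k p A n (twistMk k p A (-(n : ℤ)) a c)
      = twistMk k p A (-((n + 1 : ℕ) : ℤ)) (a ^ p) c := by
  rw [twistTransition_apply, RingEquiv.symm_apply_eq, twistEquiv_neg_twistMk,
    twistEquiv_neg_twistMk, smul_pow, ← pow_mul, ← pow_succ]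

theorem twistTransition_twistEquiv_symm (n : ℕ) (a : A) :
    twistTransition k p A n ((twistEquiv k p A _).symm a) = (twistEquiv k p A _).symm (a ^ p) := by
  rw [twistTransition_apply, RingEquiv.apply_symm_apply]

noncomputable def twistToPerfectClosure (n : ℕ) :
    Twist k p A (-(n : ℤ)) →ₐ[k] PerfectClosure A p where
  toRingHom := (PerfectClosure.mkRingHom p A n).comp (twistEquiv k p A _).toRingHom
  commutes' c := by
    change PerfectClosure.mkRingHom p A n (twistEquiv k p A _ (algebraMap k _ c)) = _
    rw [twistEquiv_neg_algebraMap, map_pow, PerfectClosure.mkRingHom_pow_pow]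
    rfl

theorem twistToPerfectClosure_apply (n : ℕ) (x : Twist k p A (-(n : ℤ))) :
    twistToPerfectClosure k p A n x = PerfectClosure.mkRingHom p A n (twistEquiv k p A _ x) :=
  rfl

theorem twistToPerfectClosure_twistEquiv_symm (n : ℕ) (a : A) :
    twistToPerfectClosure k p A n ((twistEquiv k p A _).symm a) =
      PerfectClosure.mkRingHom p A n a := by
  rw [twistToPerfectClosure_apply, RingEquiv.apply_symm_apply]

theorem twistToPerfectClosure_comp_twistTransition (n : ℕ) :
    (twistToPerfectClosure k p A (n + 1)).comp (twistTransition k p A n) =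
      twistToPerfectClosure k p A n := by
  ext x
  rw [AlgHom.comp_apply, twistToPerfectClosure_apply, twistToPerfectClosure_apply,
    twistTransition_apply, RingEquiv.apply_symm_apply, PerfectClosure.mkRingHom_succ_pow]

theorem untwistCocone_succ_pow
    (hσ : ∀ n : ℕ, (σ (n + 1)).comp (twistTransition k p A n) = σ n) (n : ℕ) (a : A) :
    untwistCocone k p A σ (n + 1) (a ^ p) = untwistCocone k p A σ n a := by
  rw [untwistCocone_apply, untwistCocone_apply, ← twistTransition_twistEquiv_symm,
    ← AlgHom.comp_apply, hσ]

noncomputable def liftTwists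
    (hσ : ∀ n : ℕ, (σ (n + 1)).comp (twistTransition k p A n) = σ n) :
    PerfectClosure A p →ₐ[k] S where
  toRingHom := PerfectClosure.liftCompatible p (untwistCocone k p A σ)
    (untwistCocone_succ_pow k p A σ hσ)
  commutes' c := by
    have h : (twistEquiv k p A (-(0 : ℕ))).symm (algebraMap k A c) = algebraMap k _ c := by
      rw [RingEquiv.symm_apply_eq, twistEquiv_neg_algebraMap, pow_zero, pow_one]
    change PerfectClosure.liftCompatible p _ _ (PerfectClosure.of A p (algebraMap k A c)) = _
    rw [← PerfectClosure.mkRingHom_zero]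
    refine (PerfectClosure.liftCompatible_mkRingHom p _ _ 0 _).trans ?_
    exact (congrArg (σ 0) h).trans ((σ 0).commutes c)

theorem liftTwists_mkRingHom
    (hσ : ∀ n : ℕ, (σ (n + 1)).comp (twistTransition k p A n) = σ n) (n : ℕ) (a : A) :
    liftTwists k p A σ hσ (PerfectClosure.mkRingHom p A n a) =
      σ n ((twistEquiv k p A _).symm a) :=
  PerfectClosure.liftCompatible_mkRingHom p _ (untwistCocone_succ_pow k p A σ hσ) n a

theorem liftTwists_comp_twistToPerfectClosure
    (hσ : ∀ n : ℕ, (σ (n + 1)).comp (twistTransition k p A n) = σ n) (n : ℕ) :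
    (liftTwists k p A σ hσ).comp (twistToPerfectClosure k p A n) = σ n := by
  ext x
  rw [AlgHom.comp_apply, twistToPerfectClosure_apply, liftTwists_mkRingHom,
    RingEquiv.symm_apply_apply]

theorem eq_liftTwists (hσ : ∀ n : ℕ, (σ (n + 1)).comp (twistTransition k p A n) = σ n)
    (f : PerfectClosure A p →ₐ[k] S)
    (hf : ∀ n : ℕ, f.comp (twistToPerfectClosure k p A n) = σ n) :
    f = liftTwists k p A σ hσ := by
  refine AlgHom.coe_ringHom_injective (PerfectClosure.eq_liftCompatible p _
    (untwistCocone_succ_pow k p A σ hσ) (f : PerfectClosure A p →+* S) fun n a => ?_)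
  rw [AlgHom.coe_toRingHom, ← twistToPerfectClosure_twistEquiv_symm k p A, ← AlgHom.comp_apply,
    hf, untwistCocone_apply]

end Twist

/-- Let `k` be a perfect field of characteristic `p` and `A` a `k`-algebra.
Then the perfect closure `A^pf` is, as a `k`-algebra, the colimit `colim_{n ≥ 0} A^(p^{-n})`
of the negative Frobenius twists along the transition maps `a ⊗ c ↦ a^p ⊗ c`: there are
transition maps `t n : A^(p^{-n}) → A^(p^{-n-1})` given on generators by `a ⊗ c ↦ a^p ⊗ c`
and a compatible cocone `ι` into `A^pf` with `ι 0 (a ⊗ 1) = φ_A a`, which is a colimit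
cocone (it satisfies the universal property of the colimit in the category of
`k`-algebras). -/
theorem perfectClosure_is_colimit_of_twists
    (A : Type max u v) [CommRing A] [Algebra k A] [CharP A p] :
    ∃ (t : ∀ n : ℕ, Twist k p A (-(n : ℤ)) →ₐ[k] Twist k p A (-((n + 1 : ℕ) : ℤ)))
      (ι : ∀ n : ℕ, Twist k p A (-(n : ℤ)) →ₐ[k] PerfectClosure A p),
      (∀ (n : ℕ) (a : A) (c : k),
          t n (twistMk k p A (-(n : ℤ)) a c) = twistMk k p A (-((n + 1 : ℕ) : ℤ)) (a ^ p) c) ∧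
      (∀ n : ℕ, (ι (n + 1)).comp (t n) = ι n) ∧
      (∀ a : A, ι 0 (twistMk k p A 0 a 1) = PerfectClosure.of A p a) ∧
      (∀ (S : Type max u v) [CommRing S] [Algebra k S],
        ∀ σ : ∀ n : ℕ, Twist k p A (-(n : ℤ)) →ₐ[k] S,
          (∀ n : ℕ, (σ (n + 1)).comp (t n) = σ n) →
          ∃! u : PerfectClosure A p →ₐ[k] S, ∀ n : ℕ, u.comp (ι n) = σ n) := by
  refine ⟨twistTransition k p A, twistToPerfectClosure k p A, twistTransition_twistMk k p A,
    twistToPerfectClosure_comp_twistTransition k p A, fun a => ?_,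
    fun S _ _ σ hσ => ⟨liftTwists k p A σ hσ, liftTwists_comp_twistToPerfectClosure k p A σ hσ,
      eq_liftTwists k p A σ hσ⟩⟩
  rw [← PerfectClosure.mkRingHom_zero, ← twistToPerfectClosure_twistEquiv_symm k p A,
    twistEquiv_symm_apply k p A]
  rfl
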